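/- Let F ∈ S♯_d with d > 2, and let G, H be operators of the form T^♭S_k⋯T^♭S_1 (compositions of truncated duality operators and shifts), and let f_0, f_1 be twist functions with 0 ≤ lexp(f_0) ≤ 1/d and 0 ≤ lexp(f_1) ≤ 1/d such that G(f_0) and H(f_1) are well defined. If G(f_0) = H(f_1), then G = H as elements of the formal group 𝔊. -/

import Mathlib

open Complex MeasureTheory Filter Topology Asymptotics Finset

noncomputable section

/-- An element of the extended Selberg class `S♯`: a Dirichlet series, absolutely
convergent for `Re s > 1`, with meromorphic continuation `F` whose only possible pole
is at `s = 1` (of order `≤ m`), entire of finite order after multiplying by `(s-1)^m`,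
satisfying a Riemann-type functional equation. -/
structure ExtSelberg where
  a : ℕ → ℂ
  ha0 : a 0 = 0
  F : ℂ → ℂ
  m : ℕ
  Q : ℝ
  hQ : 0 < Q
  r : ℕ
  lam : Fin r → ℝ
  hlam : ∀ j, 0 < lam j
  mu : Fin r → ℂ
  hmu : ∀ j, 0 ≤ (mu j).re
  w : ℂ
  hw : ‖w‖ = 1
  hsum : ∀ σ : ℝ, 1 < σ → Summable fun n : ℕ => ‖a n‖ * (n : ℝ) ^ (-σ)
  hF : ∀ s : ℂ, 1 < s.re → F s = ∑' n : ℕ, a n * (n : ℂ) ^ (-s)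
  hcont : ∃ G : ℂ → ℂ, Differentiable ℂ G ∧
    (∃ C A : ℝ, ∀ s, ‖G s‖ ≤ C * Real.exp (‖s‖ ^ A)) ∧
    ∀ s, s ≠ 1 → G s = (s - 1) ^ m * F s
  hfe : ∀ s : ℂ,
    (∀ j, ∀ n : ℕ, (lam j : ℂ) * s + mu j ≠ -(n : ℂ)) →
    (∀ j, ∀ n : ℕ, (lam j : ℂ) * (1 - s) + (starRingEnd ℂ) (mu j) ≠ -(n : ℂ)) →
    s ≠ 1 → s ≠ 0 →
    (Q : ℂ) ^ s * (∏ j, Complex.Gamma ((lam j : ℂ) * s + mu j)) * F s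
      = w * (Q : ℂ) ^ (1 - s) *
        (∏ j, Complex.Gamma ((lam j : ℂ) * (1 - s) + (starRingEnd ℂ) (mu j))) *
        (starRingEnd ℂ) (F ((starRingEnd ℂ) (1 - s)))

/-- The degree `d = 2∑λⱼ`. -/
def ExtSelberg.degree (E : ExtSelberg) : ℝ := 2 * ∑ j, E.lam j

/-- The conductor `q_F = (2π)^d Q² ∏ λⱼ^{2λⱼ}`. -/
def ExtSelberg.conductor (E : ExtSelberg) : ℝ :=
  (2 * Real.pi) ^ E.degree * E.Q ^ 2 * ∏ j, E.lam j ^ (2 * E.lam j)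

/-- The internal shift `θ_F = (2/d) Im(∑ μⱼ)`. -/
def ExtSelberg.theta (E : ExtSelberg) : ℝ := (2 / E.degree) * (∑ j, E.mu j).im

/-- The exact order `m_F` of the pole of `F` at `s = 1` (`0` if `F` is entire). -/
def ExtSelberg.polarOrder (E : ExtSelberg) : ℕ :=
  sInf {k : ℕ | ∃ G : ℂ → ℂ, Differentiable ℂ G ∧ ∀ s, s ≠ 1 → G s = (s - 1) ^ k * E.F s}

/-- A (generalized) twist function `f(ξ) = ∑ ακ ξ^κ`, encoded as the finitely
supported family of its coefficients, indexed by the (real) exponents. -/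
abbrev TwistFun := ℝ →₀ ℝ

/-- All exponents are nonnegative. -/
def ValidT (f : TwistFun) : Prop := ∀ κ ∈ f.support, 0 ≤ κ

/-- The leading exponent `lexp(f) = κ₀` (junk value `0` for `f = 0`). -/
def lexpT (f : TwistFun) : ℝ :=
  if h : f.support.Nonempty then f.support.max' h else 0

/-- Evaluation `f(ξ) = ∑ ακ ξ^κ`. -/
def evalT (f : TwistFun) (ξ : ℝ) : ℝ := ∑ κ ∈ f.support, f κ * ξ ^ κ

/-- `e(x) = e^{2πix}`. -/
def e (x : ℝ) : ℂ := Complex.exp (2 * Real.pi * Complex.I * x)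

/-- The terms of the nonlinear twist `F(s;f) = ∑ a(n) n^{-s} e(-f(n))`. -/
def twistTerm (a : ℕ → ℂ) (f : TwistFun) (s : ℂ) (n : ℕ) : ℂ :=
  a n * (n : ℂ) ^ (-s) * e (-(evalT f n))

/-- The nonlinear twist `F(s;f) = ∑ a(n) n^{-s} e(-f(n))` (as a series). -/
def twistSeries (a : ℕ → ℂ) (f : TwistFun) (s : ℂ) : ℂ := ∑' n, twistTerm a f s n

/-- `Φ(z,ξ,𝛂) = z^{1/d} - 2π f(qz/ξ,𝛂)`. -/
def PhiT (d q : ℝ) (f : TwistFun) (z ξ : ℝ) : ℝ :=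
  z ^ (1 / d) - 2 * Real.pi * evalT f (q * z / ξ)

/-- `g = T^♭(f)` for `f` with positive leading coefficient: `g` is the (unique) twist
function with nonnegative exponents describing the asymptotic expansion, up to terms
tending to `0`, of `Φ(x₀(ξ),ξ,𝛂)/(2π)` where `x₀(ξ)` is the critical point of
`z ↦ Φ(z,ξ,𝛂)`. -/
def IsDualPos (d q : ℝ) (f g : TwistFun) : Prop :=
  ValidT g ∧
  ∃ x0 : ℝ → ℝ,
    (∀ᶠ ξ in atTop, 1 ≤ x0 ξ ∧ HasDerivAt (fun z => PhiT d q f z ξ) 0 (x0 ξ)) ∧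
    Tendsto (fun ξ => PhiT d q f (x0 ξ) ξ / (2 * Real.pi) - evalT g ξ) atTop (nhds 0)

/-- `g = T^♭(f)`, the truncated dual twist function: for a negative leading
coefficient it is defined by `f* = -(-f)*`. -/
def IsDual (d q : ℝ) (f g : TwistFun) : Prop :=
  (0 < f (lexpT f) ∧ IsDualPos d q f g) ∨ (f (lexpT f) < 0 ∧ IsDualPos d q (-f) (-g))

/-- A shift: `P ∈ ℤ[ξ]` with `deg P ≥ 1`, acting by `S(f) = f + P`. -/
def IsShiftPoly (P : TwistFun) : Prop :=
  P ≠ 0 ∧ (∀ κ ∈ P.support, ∃ n : ℕ, 1 ≤ n ∧ κ = (n : ℝ)) ∧ ∀ κ, ∃ z : ℤ, P κ = (z : ℝ)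

/-- `TwistRep d q f0 f L` holds when `f = G(f0)` for some well-defined operator
`G = T^♭Sₖ⋯T^♭S₁` (possibly composed with further trivial shifts), starting from a
base twist function `f0` with `0 ≤ lexp(f0) ≤ 1/d`, the list `L = [ℓ₁,…,ℓₖ]` recording
the leading exponents `ℓⱼ = lexp(SⱼT^♭⋯T^♭S₁(f0)) > 1/d` at each application of `T^♭`. -/
inductive TwistRep (d q : ℝ) : TwistFun → TwistFun → List ℝ → Prop
  | base (f0 : TwistFun) : ValidT f0 → lexpT f0 ≤ 1 / d → TwistRep d q f0 f0 []
  | shift (f0 f P : TwistFun) (L : List ℝ) : TwistRep d q f0 f L → IsShiftPoly P →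
      TwistRep d q f0 (f + P) L
  | dual (f0 f P g : TwistFun) (L : List ℝ) : TwistRep d q f0 f L → IsShiftPoly P →
      1 / d < lexpT (f + P) → IsDual d q (f + P) g → TwistRep d q f0 g (L ++ [lexpT (f + P)])

/-- `q = q_F (2πd)^{-d}`, the parameter entering `Φ`. -/
def qop (E : ExtSelberg) : ℝ := E.conductor * (2 * Real.pi * E.degree) ^ (-E.degree)

/-- The class `𝒜(F)` of twist functions obtained from some base `f0` by a chain of
shifts and truncated duality operators. -/
def InA (E : ExtSelberg) (f : TwistFun) : Prop :=
  ∃ f0 L, TwistRep E.degree (qop E) f0 f L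

/-- `F(s;f)` extends to an entire function. -/
def EntireTwist (E : ExtSelberg) (f : TwistFun) : Prop :=
  ∃ T : ℂ → ℂ, Differentiable ℂ T ∧ ∀ s, 1 < s.re → T s = twistSeries E.a f s

/-- `Spec*(F)`: the set of `α ∈ ℝ` for which the standard twist
`F(s,α) = ∑ a(n) n^{-s} e(-α n^{1/d})` is not entire. -/
def SpecStar (E : ExtSelberg) : Set ℝ :=
  {α | ¬ EntireTwist E (Finsupp.single (1 / E.degree) α)}

/-- `Spec(F)`: the positive part of `Spec*(F)`. -/
def Spec (E : ExtSelberg) : Set ℝ := {α | 0 < α ∧ α ∈ SpecStar E}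

/-- The subclass `𝒜₀(F) ⊆ 𝒜(F)`: chains starting from a base `f0(ξ) = α ξ^{1/d}` with
`α ∈ Spec*(F)`. -/
def InA0 (E : ExtSelberg) (f : TwistFun) : Prop :=
  ∃ α ∈ SpecStar E, ∃ L, TwistRep E.degree (qop E) (Finsupp.single (1 / E.degree) α) f L

/-- The subclass `𝒜₀₀(F) ⊆ 𝒜₀(F)`: chains starting from `f0 = 0` (that is, `α = 0`). -/
def InA00 (E : ExtSelberg) (f : TwistFun) : Prop :=
  (0 : ℝ) ∈ SpecStar E ∧
    ∃ L, TwistRep E.degree (qop E) (Finsupp.single (1 / E.degree) (0 : ℝ)) f L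

/-- `D(f) = ∏ⱼ (dℓⱼ - 1)` attached to a representation with exponent list `L`. -/
def Dprod (d : ℝ) (L : List ℝ) : ℝ := (L.map fun ℓ => d * ℓ - 1).prod

/-- The weight `ω(f)`: the minimal number of duality operators among all
representations of `f` in `𝒜(F)`. -/
def weightT (E : ExtSelberg) (f : TwistFun) : ℕ :=
  sInf {n | ∃ f0 L, TwistRep E.degree (qop E) f0 f L ∧ L.length = n}

/-- `Chain d q f0 [P₁,…,Pₖ] f` holds when `f = T^♭Sₖ⋯T^♭S₁(f0)`, with `Sⱼ` the shift
by the integral polynomial `Pⱼ`; this records the word `𝐓𝐒ₖ⋯𝐓𝐒₁` of the formal group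
`𝔊`, which (in its canonical reduced form) is determined by the list `[P₁,…,Pₖ]`. -/
inductive Chain (d q : ℝ) : TwistFun → List TwistFun → TwistFun → Prop
  | nil (f : TwistFun) : Chain d q f [] f
  | cons (f P g h : TwistFun) (L : List TwistFun) : IsShiftPoly P →
      IsDual d q (f + P) g → Chain d q g L h → Chain d q f (P :: L) h

/-!
Let `n = lexp(c + P) ≥ 1` be the leading exponent of the argument of a duality step. At the
critical point `x₀(ξ)` of `Φ(·, ξ)` one has `ξ ^ s ≪ Φ(x₀(ξ), ξ) ≪ ξ ^ (n / (dn - 1))` for some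
`s > 1/d`, hence `1/d < lexp(T^♭(c + P)) ≤ n / (dn - 1) < 1` when `d > 2`. So the outputs of
`T^♭` are separated both from the base functions (`lexp ≤ 1/d`) and from the shifts (integral
exponents `≥ 1`), and `c`, `P` can be read off from `c + P`.

`T^♭` is injective: `x₀(ξ)` maximizes `Φ(·, ξ)` on `[1, ∞)`, so if `A - B` had positive leading
coefficient, then `Φ_B(y₀) ≥ Φ_B(x₀) = Φ_A(x₀) + 2π (A - B)(q x₀ / ξ)` would stay away from
`Φ_A(x₀)`, whereas `T^♭ A = T^♭ B` forces `Φ_A(x₀) - Φ_B(y₀) → 0`.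

Comparing two chains with the same value from their common end therefore recovers the last
shift, then the previous function, and so on.
-/

lemma lexpT_mem_support {f : TwistFun} (hf : f ≠ 0) : lexpT f ∈ f.support := by
  rw [lexpT, dif_pos (Finsupp.support_nonempty_iff.2 hf)]
  exact Finset.max'_mem _ _

lemma le_lexpT {f : TwistFun} {κ : ℝ} (h : κ ∈ f.support) : κ ≤ lexpT f := by
  rw [lexpT, dif_pos ⟨κ, h⟩]
  exact f.support.le_max' κ h

lemma apply_eq_zero_of_lexpT_lt {f : TwistFun} {κ : ℝ} (h : lexpT f < κ) : f κ = 0 :=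
  Finsupp.notMem_support_iff.1 fun hκ => (le_lexpT hκ).not_gt h

lemma lexpT_neg (f : TwistFun) : lexpT (-f) = lexpT f := by
  simp [lexpT, Finsupp.support_neg]

lemma neg_apply_lexpT_neg_pos {F : TwistFun} (h : F (lexpT F) < 0) : 0 < (-F) (lexpT (-F)) := by
  simpa [lexpT_neg] using h

lemma ValidT.neg {f : TwistFun} (hf : ValidT f) : ValidT (-f) := by
  simpa [ValidT, Finsupp.support_neg] using hf

lemma ValidT.sub {f g : TwistFun} (hf : ValidT f) (hg : ValidT g) : ValidT (f - g) :=
  fun κ hκ => (Finset.mem_union.1 (Finsupp.support_sub hκ)).elim (hf κ) (hg κ)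

lemma ValidT.lexpT_nonneg {f : TwistFun} (hf : ValidT f) : 0 ≤ lexpT f := by
  by_cases h : f = 0
  · simp [h, lexpT]
  · exact hf _ (lexpT_mem_support h)

lemma evalT_zero (t : ℝ) : evalT 0 t = 0 := by simp [evalT]

lemma evalT_sub (f g : TwistFun) (t : ℝ) : evalT (f - g) t = evalT f t - evalT g t :=
  Finsupp.sum_sub_index (h := fun κ a => a * t ^ κ) fun _ _ _ => by ring

lemma evalT_neg (f : TwistFun) (t : ℝ) : evalT (-f) t = -evalT f t := by
  simpa [evalT_zero] using evalT_sub 0 f t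

lemma sum_mul_rpow_sub_eq (S : Finset ℝ) (c : ℝ → ℝ) (σ τ : ℝ) {t : ℝ} (ht : 0 < t) :
    ∑ κ ∈ S, c κ * t ^ (κ - σ) = (∑ κ ∈ S, c κ * t ^ (κ - τ)) * t ^ (τ - σ) := by
  rw [Finset.sum_mul]
  refine Finset.sum_congr rfl fun κ _ => ?_
  rw [mul_assoc, ← Real.rpow_add ht, sub_add_sub_cancel]

lemma tendsto_sum_mul_rpow_sub_max {S : Finset ℝ} {τ : ℝ} (c : ℝ → ℝ) (hτ : τ ∈ S)
    (hle : ∀ κ ∈ S, κ ≤ τ) :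
    Tendsto (fun t : ℝ => ∑ κ ∈ S, c κ * t ^ (κ - τ)) atTop (𝓝 (c τ)) := by
  have hlim : Tendsto (fun t : ℝ => ∑ κ ∈ S, c κ * t ^ (κ - τ)) atTop
      (𝓝 (∑ κ ∈ S, if κ = τ then c κ else 0)) := by
    refine tendsto_finsetSum S fun κ hκ => ?_
    split_ifs with h
    · subst h
      simp
    · have hneg : Tendsto (fun t : ℝ => t ^ (κ - τ)) atTop (𝓝 0) := by
        simpa using tendsto_rpow_neg_atTop (sub_pos.2 (lt_of_le_of_ne (hle κ hκ) h))
      simpa using hneg.const_mul (c κ)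
  rwa [Finset.sum_ite_eq' S τ c, if_pos hτ] at hlim

lemma eventually_sum_mul_rpow_sub_bounds {S : Finset ℝ} {τ : ℝ} (c : ℝ → ℝ) (σ : ℝ)
    (hτ : τ ∈ S) (hle : ∀ κ ∈ S, κ ≤ τ) (hc : 0 < c τ) :
    ∀ᶠ t in atTop, c τ / 2 * t ^ (τ - σ) ≤ ∑ κ ∈ S, c κ * t ^ (κ - σ) ∧
      ∑ κ ∈ S, c κ * t ^ (κ - σ) ≤ 2 * c τ * t ^ (τ - σ) := by
  have hlim := tendsto_sum_mul_rpow_sub_max c hτ hle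
  filter_upwards [hlim.eventually (eventually_ge_nhds (half_lt_self hc)),
    hlim.eventually (eventually_le_nhds (by linarith : c τ < 2 * c τ)),
    eventually_gt_atTop 0] with t hlow hupp ht
  rw [sum_mul_rpow_sub_eq S c σ τ ht]
  have := Real.rpow_pos_of_pos ht (τ - σ)
  exact ⟨by gcongr, by gcongr⟩

lemma eventually_evalT_bounds {f : TwistFun} (hf : 0 < f (lexpT f)) :
    ∀ᶠ t in atTop, f (lexpT f) / 2 * t ^ lexpT f ≤ evalT f t ∧
      evalT f t ≤ 2 * f (lexpT f) * t ^ lexpT f := by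
  have hmem : lexpT f ∈ f.support := Finsupp.mem_support_iff.2 hf.ne'
  simpa [evalT] using eventually_sum_mul_rpow_sub_bounds f 0 hmem (fun κ => le_lexpT) hf

lemma le_of_eventually_mul_rpow_le {c C s r : ℝ} (hc : 0 < c)
    (h : ∀ᶠ ξ in atTop, c * ξ ^ s ≤ C * ξ ^ r) : s ≤ r := by
  by_contra! hrs
  have hbig := (tendsto_rpow_atTop (sub_pos.2 hrs)).eventually_gt_atTop (C / c)
  obtain ⟨ξ, hξ, hbig, hξ0⟩ := (h.and (hbig.and (eventually_gt_atTop 0))).exists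
  have hsplit : ξ ^ s = ξ ^ (s - r) * ξ ^ r := by rw [← Real.rpow_add hξ0, sub_add_cancel]
  have := Real.rpow_pos_of_pos hξ0 r
  rw [div_lt_iff₀ hc] at hbig
  nlinarith

lemma lexpT_ge_of_eventually_le_evalT {g : TwistFun} {c s : ℝ} (hc : 0 < c)
    (h : ∀ᶠ ξ in atTop, c * ξ ^ s ≤ evalT g ξ) : 0 < g (lexpT g) ∧ s ≤ lexpT g := by
  have hg : g ≠ 0 := by
    rintro rfl
    obtain ⟨ξ, hξ, hξ0⟩ := (h.and (eventually_gt_atTop 0)).exists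
    rw [evalT_zero] at hξ
    have := Real.rpow_pos_of_pos hξ0 s
    nlinarith
  have hpos : 0 < g (lexpT g) := by
    refine (Finsupp.mem_support_iff.1 (lexpT_mem_support hg)).lt_or_gt.resolve_left fun hneg => ?_
    obtain ⟨ξ, hξ, ⟨hlow, -⟩, hξ0⟩ := (h.and ((eventually_evalT_bounds
      (neg_apply_lexpT_neg_pos hneg)).and (eventually_gt_atTop 0))).exists
    rw [evalT_neg, lexpT_neg, Finsupp.neg_apply] at hlow
    have := Real.rpow_pos_of_pos hξ0 s
    have := Real.rpow_pos_of_pos hξ0 (lexpT g)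
    nlinarith
  refine ⟨hpos, le_of_eventually_mul_rpow_le (C := 2 * g (lexpT g)) hc ?_⟩
  filter_upwards [h, eventually_evalT_bounds hpos] with ξ hξ hbd
  exact hξ.trans hbd.2

lemma lexpT_le_of_eventually_evalT_le {g : TwistFun} {C r : ℝ} (hg : 0 < g (lexpT g))
    (h : ∀ᶠ ξ in atTop, evalT g ξ ≤ C * ξ ^ r) : lexpT g ≤ r := by
  refine le_of_eventually_mul_rpow_le (C := C) (half_pos hg) ?_
  filter_upwards [h, eventually_evalT_bounds hg] with ξ hξ hbd
  exact hbd.1.trans hξ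

/-- `t ^ (1 - 1/d) F'(t)`: the point `x > 0` is critical for `Φ(·, ξ)` exactly when
`critSum F d (q x / ξ) = critLevel d q ξ`. -/
def critSum (F : TwistFun) (d t : ℝ) : ℝ := ∑ κ ∈ F.support, F κ * κ * t ^ (κ - 1 / d)

def critLevel (d q ξ : ℝ) : ℝ := 1 / d / (2 * Real.pi * (q / ξ) ^ (1 / d))

lemma critLevel_eq {d q ξ : ℝ} (hq : 0 < q) (hξ : 0 < ξ) :
    critLevel d q ξ = 1 / d / (2 * Real.pi * q ^ (1 / d)) * ξ ^ (1 / d) := by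
  have := Real.rpow_pos_of_pos hq (1 / d)
  have := Real.rpow_pos_of_pos hξ (1 / d)
  have := Real.pi_pos
  rw [critLevel, Real.div_rpow hq.le hξ.le]
  field_simp

lemma hasDerivAt_critSum (F : TwistFun) (d : ℝ) {t : ℝ} (ht : 0 < t) :
    HasDerivAt (critSum F d)
      (∑ κ ∈ F.support, F κ * κ * (κ - 1 / d) * t ^ (κ - (1 / d + 1))) t := by
  refine HasDerivAt.fun_sum fun κ _ => ((Real.hasDerivAt_rpow_const (p := κ - 1 / d)
    (Or.inl ht.ne')).const_mul (F κ * κ)).congr_deriv ?_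
  rw [sub_add_eq_sub_sub]
  ring

lemma hasDerivAt_phiT (F : TwistFun) {d q ξ x : ℝ} (hq : 0 < q) (hξ : 0 < ξ) (hx : 0 < x) :
    HasDerivAt (fun z => PhiT d q F z ξ)
      (2 * Real.pi * (q / ξ) ^ (1 / d) * x ^ (1 / d - 1) *
        (critLevel d q ξ - critSum F d (q * x / ξ))) x := by
  have ht : 0 < q * x / ξ := by positivity
  have hqξ : 0 < q / ξ := by positivity
  have hinner : HasDerivAt (fun z : ℝ => q * z / ξ) (q / ξ) x := by
    simpa using ((hasDerivAt_id x).const_mul q).div_const ξ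
  have hF : HasDerivAt (fun z : ℝ => evalT F (q * z / ξ))
      (∑ κ ∈ F.support, F κ * (q / ξ * κ * (q * x / ξ) ^ (κ - 1))) x :=
    HasDerivAt.fun_sum fun κ _ => (hinner.rpow_const (p := κ) (Or.inl ht.ne')).const_mul (F κ)
  refine ((Real.hasDerivAt_rpow_const (p := 1 / d) (Or.inl hx.ne')).sub
    (hF.const_mul (2 * Real.pi))).congr_deriv ?_
  have hlevel : 2 * Real.pi * (q / ξ) ^ (1 / d) * critLevel d q ξ = 1 / d := by
    have := Real.rpow_pos_of_pos hqξ (1 / d)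
    have := Real.pi_pos
    rw [critLevel]
    field_simp
  have hterm : ∀ κ : ℝ, 2 * Real.pi * (F κ * (q / ξ * κ * (q * x / ξ) ^ (κ - 1))) =
      2 * Real.pi * (q / ξ) ^ (1 / d) * x ^ (1 / d - 1) *
        (F κ * κ * (q * x / ξ) ^ (κ - 1 / d)) := by
    intro κ
    rw [show q * x / ξ = q / ξ * x by ring, Real.mul_rpow hqξ.le hx.le,
      Real.mul_rpow hqξ.le hx.le]
    have e1 : q / ξ * (q / ξ) ^ (κ - 1) = (q / ξ) ^ (1 / d) * (q / ξ) ^ (κ - 1 / d) := by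
      rw [Real.rpow_sub_one hqξ.ne', ← Real.rpow_add hqξ, add_sub_cancel]
      field_simp
    have e2 : x ^ (κ - 1) = x ^ (1 / d - 1) * x ^ (κ - 1 / d) := by
      rw [← Real.rpow_add hx]
      ring_nf
    rw [e2]
    linear_combination 2 * Real.pi * F κ * κ * x ^ (1 / d - 1) * x ^ (κ - 1 / d) * e1
  rw [critSum, Finset.mul_sum, Finset.sum_congr rfl fun κ _ => hterm κ, ← Finset.mul_sum]
  linear_combination (-x ^ (1 / d - 1)) * hlevel

lemma critSum_eq_of_hasDerivAt {F : TwistFun} {d q ξ x : ℝ} (hq : 0 < q) (hξ : 0 < ξ)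
    (hx : 0 < x) (h : HasDerivAt (fun z => PhiT d q F z ξ) 0 x) :
    critSum F d (q * x / ξ) = critLevel d q ξ := by
  have hzero := (hasDerivAt_phiT F hq hξ hx).unique h
  have := Real.pi_pos
  have := Real.rpow_pos_of_pos (div_pos hq hξ) (1 / d)
  have := Real.rpow_pos_of_pos hx (1 / d - 1)
  have hfactor : 0 < 2 * Real.pi * (q / ξ) ^ (1 / d) * x ^ (1 / d - 1) := by positivity
  linarith [(mul_eq_zero.1 hzero).resolve_left hfactor.ne']

lemma isMaxOn_Ici_of_hasDerivAt {f f' : ℝ → ℝ} {a x : ℝ} (hax : a ≤ x)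
    (hf : ∀ y ∈ Set.Ici a, HasDerivAt f (f' y) y) (hleft : ∀ y ∈ Set.Icc a x, 0 ≤ f' y)
    (hright : ∀ y ∈ Set.Ici x, f' y ≤ 0) : IsMaxOn f (Set.Ici a) x := by
  have hcont : ContinuousOn f (Set.Ici a) :=
    fun y hy => (hf y hy).continuousAt.continuousWithinAt
  have hmono : MonotoneOn f (Set.Icc a x) :=
    monotoneOn_of_hasDerivWithinAt_nonneg (convex_Icc a x) (hcont.mono Set.Icc_subset_Ici_self)
      (fun y hy => (hf y (Set.Icc_subset_Ici_self (interior_subset hy))).hasDerivWithinAt)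
      fun y hy => hleft y (interior_subset hy)
  have hanti : AntitoneOn f (Set.Ici x) :=
    antitoneOn_of_hasDerivWithinAt_nonpos (convex_Ici x)
      (hcont.mono (Set.Ici_subset_Ici.2 hax))
      (fun y hy => (hf y (Set.Ici_subset_Ici.2 hax (interior_subset hy))).hasDerivWithinAt)
      fun y hy => hright y (interior_subset hy)
  intro y (hy : a ≤ y)
  rcases le_total y x with hyx | hxy
  · exact hmono ⟨hy, hyx⟩ ⟨hax, le_rfl⟩ hyx
  · exact hanti (Set.mem_Ici.2 le_rfl) hxy hxy

def IsCritPath (d q : ℝ) (F : TwistFun) (x0 : ℝ → ℝ) : Prop :=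
  ∀ᶠ ξ in atTop, 1 ≤ x0 ξ ∧ HasDerivAt (fun z => PhiT d q F z ξ) 0 (x0 ξ)

section CritPath

variable {d q : ℝ} {F : TwistFun} {x0 : ℝ → ℝ}

lemma IsCritPath.eventually_critSum_eq (hq : 0 < q) (h : IsCritPath d q F x0) :
    ∀ᶠ ξ in atTop, critSum F d (q * x0 ξ / ξ) = critLevel d q ξ := by
  filter_upwards [h, eventually_gt_atTop 0] with ξ ⟨hx1, hder⟩ hξ
  exact critSum_eq_of_hasDerivAt hq hξ (by linarith) hder

lemma abs_critSum_le (F : TwistFun) (d : ℝ) {a t T : ℝ} (ha : 0 < a) (hat : a ≤ t)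
    (htT : t ≤ T) :
    |critSum F d t| ≤ ∑ κ ∈ F.support, |F κ * κ| * (T ^ (κ - 1 / d) + a ^ (κ - 1 / d)) := by
  have ht : 0 < t := ha.trans_le hat
  refine (Finset.abs_sum_le_sum_abs _ _).trans (Finset.sum_le_sum fun κ _ => ?_)
  rw [abs_mul, abs_of_pos (Real.rpow_pos_of_pos ht _)]
  refine mul_le_mul_of_nonneg_left ?_ (abs_nonneg _)
  rcases le_or_gt 0 (κ - 1 / d) with hκ | hκ
  · exact le_add_of_le_of_nonneg (Real.rpow_le_rpow ht.le htT hκ) (Real.rpow_nonneg ha.le _)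
  · exact le_add_of_nonneg_of_le (Real.rpow_nonneg (ht.le.trans htT) _)
      (Real.rpow_le_rpow_of_nonpos ha hat hκ.le)

lemma tendsto_critSum_bound_mul_rpow (hd : 0 < d) (hq : 0 < q) (hFv : ValidT F) (T : ℝ) :
    Tendsto (fun ξ => (∑ κ ∈ F.support,
      |F κ * κ| * (T ^ (κ - 1 / d) + (q / ξ) ^ (κ - 1 / d))) * ξ ^ (-(1 / d))) atTop (𝓝 0) := by
  simp_rw [Finset.sum_mul]
  rw [← Finset.sum_const_zero (s := F.support)]
  refine tendsto_finsetSum _ fun κ hκ => ?_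
  have hfirst :=
    (tendsto_rpow_neg_atTop (one_div_pos.2 hd)).const_mul (|F κ * κ| * T ^ (κ - 1 / d))
  rw [mul_zero] at hfirst
  rcases (hFv κ hκ).eq_or_lt with hκ0 | hκ0
  · simp [← hκ0]
  have hsecond := (tendsto_rpow_neg_atTop hκ0).const_mul (|F κ * κ| * q ^ (κ - 1 / d))
  rw [mul_zero] at hsecond
  have hsum := hfirst.add hsecond
  rw [add_zero] at hsum
  refine hsum.congr' ?_
  filter_upwards [eventually_gt_atTop 0] with ξ hξ
  have : (q / ξ) ^ (κ - 1 / d) * ξ ^ (-(1 / d)) = q ^ (κ - 1 / d) * ξ ^ (-κ) := by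
    rw [Real.div_rpow hq.le hξ.le, div_mul_eq_mul_div, mul_div_assoc, ← Real.rpow_sub hξ]
    ring_nf
  linear_combination (-|F κ * κ|) * this

lemma eventually_abs_critSum_lt (hd : 0 < d) (hq : 0 < q) (hFv : ValidT F) (T : ℝ) :
    ∀ᶠ ξ in atTop, ∀ t ∈ Set.Icc (q / ξ) T, |critSum F d t| < critLevel d q ξ := by
  have hc : 0 < 1 / d / (2 * Real.pi * q ^ (1 / d)) := by
    have := Real.rpow_pos_of_pos hq (1 / d)
    have := Real.pi_pos
    positivity
  filter_upwards [(tendsto_critSum_bound_mul_rpow hd hq hFv T).eventually (eventually_lt_nhds hc),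
    eventually_gt_atTop 0] with ξ hsmall hξ t ht
  have hpow := Real.rpow_pos_of_pos hξ (1 / d)
  rw [Real.rpow_neg hξ.le, ← div_eq_mul_inv, div_lt_iff₀ hpow] at hsmall
  rw [critLevel_eq hq hξ]
  exact (abs_critSum_le F d (div_pos hq hξ) ht.1 ht.2).trans_lt hsmall

lemma IsCritPath.tendsto_atTop (hd : 0 < d) (hq : 0 < q) (hFv : ValidT F)
    (h : IsCritPath d q F x0) : Tendsto (fun ξ => q * x0 ξ / ξ) atTop atTop := by
  refine Filter.tendsto_atTop.2 fun b => ?_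
  filter_upwards [eventually_abs_critSum_lt hd hq hFv b, h, h.eventually_critSum_eq hq,
    eventually_gt_atTop 0] with ξ hsmall ⟨hx1, _⟩ hcrit hξ
  by_contra! hlt
  have hqt : q / ξ ≤ q * x0 ξ / ξ := by gcongr; exact le_mul_of_one_le_right hq.le hx1
  have := hsmall _ ⟨hqt, hlt.le⟩
  rw [hcrit] at this
  exact (le_abs_self _).not_gt this

lemma eventually_critSum_bounds (hd : 0 < d) (hFn : 1 / d < lexpT F)
    (hFpos : 0 < F (lexpT F)) :
    ∀ᶠ t in atTop, F (lexpT F) * lexpT F / 2 * t ^ (lexpT F - 1 / d) ≤ critSum F d t ∧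
      0 < ∑ κ ∈ F.support, F κ * κ * (κ - 1 / d) * t ^ (κ - (1 / d + 1)) := by
  have hmem : lexpT F ∈ F.support := Finsupp.mem_support_iff.2 hFpos.ne'
  have hn : 0 < lexpT F := (one_div_pos.2 hd).trans hFn
  have hle : ∀ κ ∈ F.support, κ ≤ lexpT F := fun κ => le_lexpT
  filter_upwards [eventually_sum_mul_rpow_sub_bounds (fun κ => F κ * κ) (1 / d) hmem hle
      (by positivity),
    eventually_sum_mul_rpow_sub_bounds (fun κ => F κ * κ * (κ - 1 / d)) (1 / d + 1) hmem hle
      (mul_pos (by positivity) (sub_pos.2 hFn)),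
    eventually_gt_atTop 0] with t hsum hderiv ht
  refine ⟨hsum.1, lt_of_lt_of_le ?_ hderiv.1⟩
  have := Real.rpow_pos_of_pos ht (lexpT F - (1 / d + 1))
  have := sub_pos.2 hFn
  positivity

lemma exists_strictMonoOn_critSum (hd : 0 < d) (hFn : 1 / d < lexpT F)
    (hFpos : 0 < F (lexpT F)) : ∃ T, 0 < T ∧ StrictMonoOn (critSum F d) (Set.Ici T) := by
  obtain ⟨T, hT⟩ := eventually_atTop.1 (eventually_critSum_bounds hd hFn hFpos)
  have hpos : ∀ t ∈ Set.Ici (max T 1), 0 < t :=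
    fun t ht => one_pos.trans_le ((le_max_right _ _).trans ht)
  refine ⟨max T 1, hpos _ (Set.mem_Ici.2 le_rfl), ?_⟩
  refine strictMonoOn_of_hasDerivWithinAt_pos (convex_Ici _)
    (fun t ht => (hasDerivAt_critSum F d (hpos t ht)).continuousAt.continuousWithinAt)
    (fun t ht => (hasDerivAt_critSum F d (hpos t (interior_subset ht))).hasDerivWithinAt)
    fun t ht => (hT t ((le_max_left _ _).trans (interior_subset ht : t ∈ Set.Ici _))).2

/-- `critSum` stays below `critLevel` on `[q/ξ, T]` and increases past `T`, so `Φ(·, ξ)`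
increases up to `x0 ξ` and decreases after it. -/
lemma IsCritPath.eventually_isMaxOn (hd : 0 < d) (hq : 0 < q) (hFv : ValidT F)
    (hFn : 1 / d < lexpT F) (hFpos : 0 < F (lexpT F)) (h : IsCritPath d q F x0) :
    ∀ᶠ ξ in atTop, IsMaxOn (fun z => PhiT d q F z ξ) (Set.Ici 1) (x0 ξ) := by
  obtain ⟨T, -, hmono⟩ := exists_strictMonoOn_critSum hd hFn hFpos
  filter_upwards [h, h.eventually_critSum_eq hq,
    (h.tendsto_atTop hd hq hFv).eventually_ge_atTop T, eventually_abs_critSum_lt hd hq hFv T,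
    eventually_gt_atTop 0] with ξ ⟨hx1, _⟩ hcrit hT hsmall hξ
  have hder : ∀ y ∈ Set.Ici (1 : ℝ), HasDerivAt (fun z => PhiT d q F z ξ) _ y :=
    fun y hy => hasDerivAt_phiT F hq hξ (one_pos.trans_le hy)
  have hfactor : ∀ y ∈ Set.Ici (1 : ℝ),
      0 ≤ 2 * Real.pi * (q / ξ) ^ (1 / d) * y ^ (1 / d - 1) := fun y hy => by
      have := Real.pi_pos
      have := Real.rpow_pos_of_pos (div_pos hq hξ) (1 / d)
      have := Real.rpow_pos_of_pos (one_pos.trans_le hy) (1 / d - 1)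
      positivity
  refine isMaxOn_Ici_of_hasDerivAt hx1 hder (fun y hy => ?_) fun y hy => ?_
  · refine mul_nonneg (hfactor y hy.1) (sub_nonneg.2 ?_)
    have hyx : q * y / ξ ≤ q * x0 ξ / ξ := by gcongr; exact hy.2
    rcases le_or_gt (q * y / ξ) T with hyT | hTy
    · have hqy : q / ξ ≤ q * y / ξ := by gcongr; exact le_mul_of_one_le_right hq.le hy.1
      exact (le_abs_self _).trans (hsmall _ ⟨hqy, hyT⟩).le
    · exact hcrit ▸ (hmono.le_iff_le hTy.le hT).2 hyx
  · have hxy : q * x0 ξ / ξ ≤ q * y / ξ := by gcongr; exact hy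
    refine mul_nonpos_of_nonneg_of_nonpos (hfactor y (hx1.trans hy)) (sub_nonpos.2 ?_)
    exact hcrit ▸ (hmono.le_iff_le hT (hT.trans hxy)).2 hxy

lemma phiT_rpow_eq (F : TwistFun) {d q ξ : ℝ} (e : ℝ) (hξ : 0 < ξ) :
    PhiT d q F (ξ ^ e) ξ = ξ ^ (e / d) - 2 * Real.pi * evalT F (q * ξ ^ (e - 1)) := by
  rw [PhiT, ← Real.rpow_mul hξ.le, mul_one_div, Real.rpow_sub_one hξ.ne', mul_div_assoc]

/-- Testing `Φ(·, ξ)` at `x = ξ ^ e` with `1 < e < dn/(dn-1)`, where the term `ξ ^ (e/d)`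
dominates `2π F(q ξ ^ (e-1)) ≍ ξ ^ ((e-1) n)`. -/
lemma IsCritPath.exists_rpow_le_phiT (hd : 0 < d) (hq : 0 < q) (hFv : ValidT F)
    (hFn : 1 / d < lexpT F) (hFpos : 0 < F (lexpT F)) (h : IsCritPath d q F x0) :
    ∃ s, 1 / d < s ∧ ∀ᶠ ξ in atTop, ξ ^ s / 2 ≤ PhiT d q F (x0 ξ) ξ := by
  set n := lexpT F
  have hdn : 0 < d * n - 1 := by rw [div_lt_iff₀' hd] at hFn; linarith
  obtain ⟨e, he1, he⟩ := exists_between ((one_lt_div hdn).2 (by linarith : d * n - 1 < d * n))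
  have hexp : (e - 1) * n < e / d := by
    rw [lt_div_iff₀ hdn] at he
    rw [lt_div_iff₀ hd]
    linarith
  refine ⟨e / d, by gcongr, ?_⟩
  set C := 2 * Real.pi * (2 * F n) * q ^ n
  have hsmall : Tendsto (fun ξ : ℝ => C * ξ ^ ((e - 1) * n - e / d)) atTop (𝓝 0) := by
    simpa using (tendsto_rpow_neg_atTop (sub_pos.2 hexp)).const_mul C
  have hbase : Tendsto (fun ξ : ℝ => q * ξ ^ (e - 1)) atTop atTop :=
    (tendsto_rpow_atTop (sub_pos.2 he1)).const_mul_atTop hq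
  filter_upwards [h.eventually_isMaxOn hd hq hFv hFn hFpos,
    hbase.eventually (eventually_evalT_bounds hFpos),
    hsmall.eventually (eventually_le_nhds (by norm_num : (0 : ℝ) < 1 / 2)),
    eventually_ge_atTop 1] with ξ hmax hF hC hξ1
  have hξ : 0 < ξ := one_pos.trans_le hξ1
  have hsplit : ξ ^ ((e - 1) * n) = ξ ^ ((e - 1) * n - e / d) * ξ ^ (e / d) := by
    rw [← Real.rpow_add hξ, sub_add_cancel]
  have hFbound : 2 * Real.pi * evalT F (q * ξ ^ (e - 1)) ≤ C * ξ ^ ((e - 1) * n) := by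
    rw [Real.mul_rpow hq.le (Real.rpow_nonneg hξ.le _), ← Real.rpow_mul hξ.le] at hF
    have := Real.pi_pos
    nlinarith [hF.2]
  have := Real.rpow_pos_of_pos hξ (e / d)
  have hmaxe : PhiT d q F (ξ ^ e) ξ ≤ PhiT d q F (x0 ξ) ξ :=
    hmax (Real.one_le_rpow hξ1 (by linarith) : ξ ^ e ∈ Set.Ici 1)
  rw [phiT_rpow_eq F e hξ] at hmaxe
  have : C * ξ ^ ((e - 1) * n) ≤ ξ ^ (e / d) / 2 := by
    rw [hsplit, ← mul_assoc]
    nlinarith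
  linarith

/-- At the critical point, `critSum ≍ t₀ ^ (n - 1/d)` equals `critLevel ≍ ξ ^ (1/d)`, where
`t₀ = q x₀ / ξ`. -/
lemma IsCritPath.exists_rpow_le (hd : 0 < d) (hq : 0 < q) (hFv : ValidT F)
    (hFn : 1 / d < lexpT F) (hFpos : 0 < F (lexpT F)) (h : IsCritPath d q F x0) :
    ∃ K, ∀ᶠ ξ in atTop, x0 ξ ^ (lexpT F - 1 / d) ≤ K * ξ ^ lexpT F := by
  set n := lexpT F with hn
  have hFn0 : 0 < F n * n := mul_pos hFpos ((one_div_pos.2 hd).trans hFn)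
  set c := 1 / d / (2 * Real.pi * q ^ (1 / d))
  set K := 2 * c / (F n * n) * q ^ (-(n - 1 / d)) with hK
  refine ⟨K, ?_⟩
  filter_upwards [h, h.eventually_critSum_eq hq,
    (h.tendsto_atTop hd hq hFv).eventually (eventually_critSum_bounds hd hFn hFpos),
    eventually_gt_atTop 0] with ξ hx hcrit hsum hξ
  set t := q * x0 ξ / ξ
  have ht : 0 < t := div_pos (mul_pos hq (one_pos.trans_le hx.1)) hξ
  have htp : t ^ (n - 1 / d) ≤ 2 * c / (F n * n) * ξ ^ (1 / d) := by
    have hlow := hsum.1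
    rw [hcrit, critLevel_eq hq hξ, ← hn] at hlow
    rw [div_mul_eq_mul_div, le_div_iff₀ hFn0]
    linarith
  have hxt : x0 ξ = t * ξ * q⁻¹ := by simp only [t]; field_simp
  rw [hxt, Real.mul_rpow (by positivity) (inv_nonneg.2 hq.le), Real.mul_rpow ht.le hξ.le,
    Real.inv_rpow hq.le, ← Real.rpow_neg hq.le]
  calc t ^ (n - 1 / d) * ξ ^ (n - 1 / d) * q ^ (-(n - 1 / d))
      ≤ 2 * c / (F n * n) * ξ ^ (1 / d) * ξ ^ (n - 1 / d) * q ^ (-(n - 1 / d)) := by gcongr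
    _ = K * ξ ^ n := by
      rw [hK, mul_assoc _ (ξ ^ (1 / d)), ← Real.rpow_add hξ, add_sub_cancel]
      ring

lemma IsCritPath.exists_phiT_le_rpow (hd : 0 < d) (hq : 0 < q) (hFv : ValidT F)
    (hFn : 1 / d < lexpT F) (hFpos : 0 < F (lexpT F)) (h : IsCritPath d q F x0) :
    ∃ C, ∀ᶠ ξ in atTop, PhiT d q F (x0 ξ) ξ ≤ C * ξ ^ (lexpT F / (d * lexpT F - 1)) := by
  set n := lexpT F with hn
  have hdn : 0 < d * n - 1 := by rw [div_lt_iff₀' hd] at hFn; linarith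
  obtain ⟨K, hK⟩ := h.exists_rpow_le hd hq hFv hFn hFpos
  refine ⟨K ^ (1 / (d * n - 1)), ?_⟩
  filter_upwards [h, hK, (h.tendsto_atTop hd hq hFv).eventually (eventually_evalT_bounds hFpos),
    eventually_gt_atTop 0] with ξ hx hxK hF hξ
  have hx0 : 0 < x0 ξ := one_pos.trans_le hx.1
  have hK0 : 0 ≤ K := by
    have := Real.rpow_pos_of_pos hx0 (n - 1 / d)
    have := Real.rpow_pos_of_pos hξ n
    by_contra! hK0
    nlinarith
  -- `(n - 1/d) / (d n - 1) = 1/d`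
  have hx0_root : x0 ξ ^ (1 / d) = (x0 ξ ^ (n - 1 / d)) ^ (1 / (d * n - 1)) := by
    rw [← Real.rpow_mul hx0.le]
    congr 1
    field_simp
  have hphi : PhiT d q F (x0 ξ) ξ ≤ x0 ξ ^ (1 / d) := by
    have := Real.pi_pos
    have := Real.rpow_pos_of_pos (div_pos (mul_pos hq hx0) hξ) n
    have := hF.1
    rw [PhiT, ← hn] at *
    nlinarith
  calc PhiT d q F (x0 ξ) ξ ≤ (x0 ξ ^ (n - 1 / d)) ^ (1 / (d * n - 1)) := hx0_root ▸ hphi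
    _ ≤ (K * ξ ^ n) ^ (1 / (d * n - 1)) := by gcongr
    _ = K ^ (1 / (d * n - 1)) * ξ ^ (n / (d * n - 1)) := by
      rw [Real.mul_rpow hK0 (Real.rpow_nonneg hξ.le _), ← Real.rpow_mul hξ.le, mul_one_div]

end CritPath

section Duality

variable {d q : ℝ}

lemma IsDualPos.lexpT_bounds {F g : TwistFun} (hd : 0 < d) (hq : 0 < q) (hFv : ValidT F)
    (hFn : 1 / d < lexpT F) (hFpos : 0 < F (lexpT F)) (h : IsDualPos d q F g) :
    0 < g (lexpT g) ∧ 1 / d < lexpT g ∧ lexpT g ≤ lexpT F / (d * lexpT F - 1) := by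
  obtain ⟨-, x0, hx0 : IsCritPath d q F x0, htend⟩ := h
  have hπ := Real.pi_pos
  have hgap₁ := htend.eventually (eventually_lt_nhds one_pos)
  have hgap₂ := htend.eventually (eventually_gt_nhds neg_one_lt_zero)
  obtain ⟨s, hs, hlow⟩ := hx0.exists_rpow_le_phiT hd hq hFv hFn hFpos
  obtain ⟨C, hupp⟩ := hx0.exists_phiT_le_rpow hd hq hFv hFn hFpos
  have hs0 : 0 < s := (one_div_pos.2 hd).trans hs
  obtain ⟨hpos, hsg⟩ : 0 < g (lexpT g) ∧ s ≤ lexpT g := by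
    refine lexpT_ge_of_eventually_le_evalT (c := 1 / (8 * Real.pi)) (by positivity) ?_
    filter_upwards [hlow, hgap₁, (tendsto_rpow_atTop hs0).eventually_ge_atTop (8 * Real.pi)]
      with ξ hΦ hg hξ
    rw [sub_lt_iff_lt_add, div_lt_iff₀ (by positivity)] at hg
    rw [div_mul_eq_mul_div, div_le_iff₀ (by positivity)]
    nlinarith
  refine ⟨hpos, hs.trans_le hsg,
    lexpT_le_of_eventually_evalT_le hpos (C := C / (2 * Real.pi) + 1) ?_⟩
  have hr : 0 ≤ lexpT F / (d * lexpT F - 1) := by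
    have : 0 < d * lexpT F - 1 := by rw [div_lt_iff₀' hd] at hFn; linarith
    exact div_nonneg ((one_div_pos.2 hd).trans hFn).le this.le
  filter_upwards [hupp, hgap₂, eventually_ge_atTop 1] with ξ hΦ hg hξ
  have := Real.one_le_rpow hξ hr
  rw [lt_sub_iff_add_lt, lt_div_iff₀ (by positivity)] at hg
  have : evalT g ξ - 1 ≤ C * ξ ^ (lexpT F / (d * lexpT F - 1)) / (2 * Real.pi) := by
    rw [le_div_iff₀ (by positivity)]
    linarith
  rw [add_mul, div_mul_eq_mul_div, one_mul]
  linarith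

lemma IsDual.lexpT_bounds {F g : TwistFun} (hd : 0 < d) (hq : 0 < q) (hFv : ValidT F)
    (hFn : 1 / d < lexpT F) (h : IsDual d q F g) :
    ValidT g ∧ 1 / d < lexpT g ∧ lexpT g ≤ lexpT F / (d * lexpT F - 1) := by
  rcases h with ⟨hFpos, h⟩ | ⟨hFneg, h⟩
  · exact ⟨h.1, (h.lexpT_bounds hd hq hFv hFn hFpos).2⟩
  · have := (h.lexpT_bounds hd hq hFv.neg (by rwa [lexpT_neg]) (neg_apply_lexpT_neg_pos hFneg)).2
    rw [lexpT_neg, lexpT_neg] at this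
    exact ⟨by simpa using h.1.neg, this⟩

lemma phiT_eq_add_evalT_sub (A B : TwistFun) (d q x ξ : ℝ) :
    PhiT d q B x ξ = PhiT d q A x ξ + 2 * Real.pi * evalT (A - B) (q * x / ξ) := by
  rw [PhiT, PhiT, evalT_sub]
  ring

lemma IsCritPath.apply_lexpT_sub_nonpos {A B : TwistFun} {x0 y0 : ℝ → ℝ} (hd : 0 < d)
    (hq : 0 < q) (hAv : ValidT A) (hBv : ValidT B) (hBn : 1 / d < lexpT B)
    (hBpos : 0 < B (lexpT B)) (hx0 : IsCritPath d q A x0) (hy0 : IsCritPath d q B y0)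
    (htend : Tendsto (fun ξ => PhiT d q A (x0 ξ) ξ - PhiT d q B (y0 ξ) ξ) atTop (𝓝 0)) :
    (A - B) (lexpT (A - B)) ≤ 0 := by
  by_contra! hδ
  set D := A - B
  have hπ := Real.pi_pos
  have hDlow : ∀ᶠ t in atTop, D (lexpT D) / 2 ≤ evalT D t := by
    filter_upwards [eventually_evalT_bounds hδ, eventually_ge_atTop 1] with t ht ht1
    have := Real.one_le_rpow ht1 (hAv.sub hBv).lexpT_nonneg
    nlinarith [ht.1]
  obtain ⟨ξ, hgap, hmax, hx, hD⟩ :=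
    ((htend.eventually (eventually_gt_nhds (neg_lt_zero.2 (mul_pos hπ hδ)))).and
      ((hy0.eventually_isMaxOn hd hq hBv hBn hBpos).and
        (hx0.and ((hx0.tendsto_atTop hd hq hAv).eventually hDlow)))).exists
  have hBx : PhiT d q B (x0 ξ) ξ ≤ PhiT d q B (y0 ξ) ξ := hmax (hx.1 : x0 ξ ∈ Set.Ici 1)
  rw [phiT_eq_add_evalT_sub A B] at hBx
  nlinarith

lemma IsDualPos.injective {A B g : TwistFun} (hd : 0 < d) (hq : 0 < q) (hAv : ValidT A)
    (hAn : 1 / d < lexpT A) (hApos : 0 < A (lexpT A)) (hBv : ValidT B) (hBn : 1 / d < lexpT B)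
    (hBpos : 0 < B (lexpT B)) (hA : IsDualPos d q A g) (hB : IsDualPos d q B g) : A = B := by
  obtain ⟨-, x0, hx0 : IsCritPath d q A x0, hA⟩ := hA
  obtain ⟨-, y0, hy0 : IsCritPath d q B y0, hB⟩ := hB
  have htend : Tendsto (fun ξ => PhiT d q A (x0 ξ) ξ - PhiT d q B (y0 ξ) ξ) atTop (𝓝 0) := by
    have := (hA.sub hB).const_mul (2 * Real.pi)
    rw [sub_zero, mul_zero] at this
    refine this.congr fun ξ => ?_
    have := Real.pi_pos
    field_simp
    ring
  have hAB := hx0.apply_lexpT_sub_nonpos hd hq hAv hBv hBn hBpos hy0 htend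
  have hBA := hy0.apply_lexpT_sub_nonpos hd hq hBv hAv hAn hApos hx0
    (by simpa using htend.neg)
  rw [← neg_sub, lexpT_neg, Finsupp.neg_apply, neg_nonpos] at hBA
  by_contra hne
  exact Finsupp.mem_support_iff.1 (lexpT_mem_support (sub_ne_zero.2 hne)) (hAB.antisymm hBA)

lemma IsDual.injective {A B g : TwistFun} (hd : 0 < d) (hq : 0 < q) (hAv : ValidT A)
    (hAn : 1 / d < lexpT A) (hBv : ValidT B) (hBn : 1 / d < lexpT B) (hA : IsDual d q A g)
    (hB : IsDual d q B g) : A = B := by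
  have hAn' : 1 / d < lexpT (-A) := by rwa [lexpT_neg]
  have hBn' : 1 / d < lexpT (-B) := by rwa [lexpT_neg]
  rcases hA with ⟨hA0, hA⟩ | ⟨hA0, hA⟩ <;> rcases hB with ⟨hB0, hB⟩ | ⟨hB0, hB⟩
  · exact hA.injective hd hq hAv hAn hA0 hBv hBn hB0 hB
  · have h₁ := (hA.lexpT_bounds hd hq hAv hAn hA0).1
    have h₂ := (hB.lexpT_bounds hd hq hBv.neg hBn' (neg_apply_lexpT_neg_pos hB0)).1
    rw [lexpT_neg, Finsupp.neg_apply] at h₂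
    linarith
  · have h₁ := (hA.lexpT_bounds hd hq hAv.neg hAn' (neg_apply_lexpT_neg_pos hA0)).1
    have h₂ := (hB.lexpT_bounds hd hq hBv hBn hB0).1
    rw [lexpT_neg, Finsupp.neg_apply] at h₁
    linarith
  · exact neg_injective (hA.injective hd hq hAv.neg hAn' (neg_apply_lexpT_neg_pos hA0) hBv.neg
      hBn' (neg_apply_lexpT_neg_pos hB0) hB)

end Duality

lemma IsShiftPoly.apply_eq_zero_of_lt_one {P : TwistFun} (hP : IsShiftPoly P) {κ : ℝ}
    (hκ : κ < 1) : P κ = 0 := by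
  by_contra h
  obtain ⟨m, hm, rfl⟩ := hP.2.1 κ (Finsupp.mem_support_iff.2 h)
  exact hκ.not_ge (by exact_mod_cast hm)

lemma IsShiftPoly.one_le_lexpT {P : TwistFun} (hP : IsShiftPoly P) : 1 ≤ lexpT P := by
  by_contra! h
  exact hP.1 (Finsupp.support_eq_empty.1 (Finset.eq_empty_of_forall_notMem fun κ hκ =>
    Finsupp.mem_support_iff.1 hκ (hP.apply_eq_zero_of_lt_one ((le_lexpT hκ).trans_lt h))))

lemma IsShiftPoly.lexpT_add {c P : TwistFun} (hP : IsShiftPoly P) (hc : lexpT c < 1) :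
    lexpT (c + P) = lexpT P := by
  have hP1 := hP.one_le_lexpT
  have hcP : (c + P) (lexpT P) ≠ 0 := by
    rw [Finsupp.add_apply, apply_eq_zero_of_lexpT_lt (hc.trans_le hP1), zero_add]
    exact Finsupp.mem_support_iff.1 (lexpT_mem_support hP.1)
  refine le_antisymm ?_ (le_lexpT (Finsupp.mem_support_iff.2 hcP))
  have hmem := lexpT_mem_support fun (h : c + P = 0) => hcP (by rw [h, Finsupp.zero_apply])
  rcases Finset.mem_union.1 (Finsupp.support_add hmem) with h | h
  · linarith [le_lexpT h]
  · exact le_lexpT h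

lemma IsShiftPoly.one_le_lexpT_add {c P : TwistFun} (hP : IsShiftPoly P) (hc : lexpT c < 1) :
    1 ≤ lexpT (c + P) :=
  hP.lexpT_add hc ▸ hP.one_le_lexpT

lemma IsShiftPoly.validT_add {c P : TwistFun} (hP : IsShiftPoly P) (hc : ValidT c) :
    ValidT (c + P) := by
  intro κ hκ
  rcases Finset.mem_union.1 (Finsupp.support_add hκ) with h | h
  · exact hc κ h
  · obtain ⟨m, -, rfl⟩ := hP.2.1 κ h
    positivity

lemma IsShiftPoly.eq_of_add_eq {c e P Q : TwistFun} (hP : IsShiftPoly P) (hQ : IsShiftPoly Q)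
    (hc : lexpT c < 1) (he : lexpT e < 1) (h : c + P = e + Q) : c = e ∧ P = Q := by
  have hκ := fun κ => DFunLike.congr_fun h κ
  simp only [Finsupp.add_apply] at hκ
  constructor <;> ext κ <;> rcases lt_or_ge κ 1 with h1 | h1 <;> have := hκ κ
  · rwa [hP.apply_eq_zero_of_lt_one h1, hQ.apply_eq_zero_of_lt_one h1, add_zero, add_zero] at this
  · rw [apply_eq_zero_of_lexpT_lt (hc.trans_le h1), apply_eq_zero_of_lexpT_lt (he.trans_le h1)]
  · rw [hP.apply_eq_zero_of_lt_one h1, hQ.apply_eq_zero_of_lt_one h1]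
  · rwa [apply_eq_zero_of_lexpT_lt (hc.trans_le h1), apply_eq_zero_of_lexpT_lt (he.trans_le h1),
      zero_add, zero_add] at this

section Chain

variable {d q : ℝ}

lemma IsDual.lexpT_bounds_of_add_shift {c P g : TwistFun} (hd : 2 < d) (hq : 0 < q)
    (hcv : ValidT c) (hc : lexpT c < 1) (hP : IsShiftPoly P) (h : IsDual d q (c + P) g) :
    ValidT g ∧ 1 / d < lexpT g ∧ lexpT g < 1 := by
  have hn := hP.one_le_lexpT_add hc
  have h1d : 1 / d < 1 := by rw [div_lt_one (by linarith)]; linarith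
  obtain ⟨hgv, hlow, hupp⟩ :=
    h.lexpT_bounds (by linarith) hq (hP.validT_add hcv) (h1d.trans_le hn)
  refine ⟨hgv, hlow, hupp.trans_lt ?_⟩
  rw [div_lt_one (by nlinarith)]
  nlinarith

lemma Chain.eq_of_nil {a f : TwistFun} (h : Chain d q a [] f) : f = a := by
  cases h
  rfl

lemma Chain.of_append_singleton {a f P : TwistFun} {L : List TwistFun}
    (h : Chain d q a (L ++ [P]) f) :
    ∃ c, Chain d q a L c ∧ IsShiftPoly P ∧ IsDual d q (c + P) f := by
  induction L generalizing a with
  | nil =>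
    rw [List.nil_append] at h
    cases h with
    | cons _ _ g _ _ hP hdual hg => exact ⟨a, Chain.nil a, hP, hg.eq_of_nil ▸ hdual⟩
  | cons Q L ih =>
    rw [List.cons_append] at h
    cases h with
    | cons _ _ g _ _ hQ hdual hg =>
      obtain ⟨c, hc, hP, hcP⟩ := ih hg
      exact ⟨c, Chain.cons a Q g c L hQ hdual hc, hP, hcP⟩

lemma Chain.lexpT_bounds {a f : TwistFun} {L : List TwistFun} (hd : 2 < d) (hq : 0 < q)
    (h : Chain d q a L f) (hav : ValidT a) (ha : lexpT a < 1) :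
    ValidT f ∧ lexpT f < 1 ∧ (L ≠ [] → 1 / d < lexpT f) := by
  induction h with
  | nil => exact ⟨hav, ha, fun h => absurd rfl h⟩
  | cons c P g f L hP hdual hchain ih =>
    obtain ⟨hgv, hglow, hg1⟩ := hdual.lexpT_bounds_of_add_shift hd hq hav ha hP
    obtain ⟨hfv, hf1, hflow⟩ := ih hgv hg1
    refine ⟨hfv, hf1, fun _ => ?_⟩
    by_cases hL : L = []
    · subst hL
      exact hchain.eq_of_nil ▸ hglow
    · exact hflow hL

lemma Chain.shifts_unique {a b f : TwistFun} {Ps Qs : List TwistFun} (hd : 2 < d) (hq : 0 < q)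
    (hav : ValidT a) (ha : lexpT a ≤ 1 / d) (hbv : ValidT b) (hb : lexpT b ≤ 1 / d)
    (hG : Chain d q a Ps f) (hH : Chain d q b Qs f) : Ps = Qs := by
  have h1d : 1 / d < 1 := by rw [div_lt_one (by linarith)]; linarith
  induction Ps using List.reverseRecOn generalizing Qs f with
  | nil =>
    by_contra hQs
    have := (hH.lexpT_bounds hd hq hbv (hb.trans_lt h1d)).2.2 (Ne.symm hQs)
    rw [hG.eq_of_nil] at this
    linarith
  | append_singleton Ps P ih =>
    obtain ⟨c, hc, hP, hcP⟩ := hG.of_append_singleton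
    rcases Qs.eq_nil_or_concat' with rfl | ⟨Qs, Q, rfl⟩
    · have := (hG.lexpT_bounds hd hq hav (ha.trans_lt h1d)).2.2 (by simp)
      rw [hH.eq_of_nil] at this
      linarith
    obtain ⟨e, he, hQ, heQ⟩ := hH.of_append_singleton
    obtain ⟨hcv, hc1, -⟩ := hc.lexpT_bounds hd hq hav (ha.trans_lt h1d)
    obtain ⟨hev, he1, -⟩ := he.lexpT_bounds hd hq hbv (hb.trans_lt h1d)
    have hsum := hcP.injective (by linarith) hq (hP.validT_add hcv)
      (h1d.trans_le (hP.one_le_lexpT_add hc1)) (hQ.validT_add hev)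
      (h1d.trans_le (hQ.one_le_lexpT_add he1)) heQ
    obtain ⟨rfl, rfl⟩ := hP.eq_of_add_eq hQ hc1 he1 hsum
    rw [ih hc he]

end Chain

lemma qop_pos (E : ExtSelberg) (hd : 0 < E.degree) : 0 < qop E := by
  have := E.hQ
  have := Real.pi_pos
  have : 0 < ∏ j, E.lam j ^ (2 * E.lam j) :=
    Finset.prod_pos fun j _ => Real.rpow_pos_of_pos (E.hlam j) _
  unfold qop ExtSelberg.conductor
  positivity

theorem fact2_general (E : ExtSelberg) (hd : 2 < E.degree)
    (f0 f1 f : TwistFun)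
    (h0v : ValidT f0) (h0 : lexpT f0 ≤ 1 / E.degree)
    (h1v : ValidT f1) (h1 : lexpT f1 ≤ 1 / E.degree)
    (Ps Qs : List TwistFun)
    (hG : Chain E.degree (qop E) f0 Ps f)
    (hH : Chain E.degree (qop E) f1 Qs f) :
    Ps = Qs :=
  hG.shifts_unique hd (qop_pos E (by linarith)) h0v h0 h1v h1 hH

/-- **Fact 2.** If `d > 2` and `G(f₀) = H(f₁)` for well-defined `G = T^♭Sₖ⋯T^♭S₁`,
`H = T^♭S'ₖ'⋯T^♭S'₁` and bases `f₀, f₁` with `0 ≤ lexp ≤ 1/d`, then `G = H` as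
elements of the formal group `𝔊` (i.e. the words of shifts coincide). -/
theorem fact2 (E : ExtSelberg) (hd : 2 < E.degree)
    (f0 f1 f : TwistFun)
    (h0v : ValidT f0) (h0 : lexpT f0 ≤ 1 / E.degree)
    (h1v : ValidT f1) (h1 : lexpT f1 ≤ 1 / E.degree)
    (Ps Qs : List TwistFun) (hPs : Ps ≠ []) (hQs : Qs ≠ [])
    (hG : Chain E.degree (qop E) f0 Ps f)
    (hH : Chain E.degree (qop E) f1 Qs f) :
    Ps = Qs :=
  fact2_general E hd f0 f1 f h0v h0 h1v h1 Ps Qs hG hH
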